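/- arXiv:1807.03904 — 2 statements merged into one kernel-verified Lean document; each statement's English description precedes it below -/
import Mathlib

section
/- Let K be a compact topological group with Haar probability measure, let G and Γ be topological groups, and let ι_G : K → G and ι_Γ : K → Γ be continuous group homomorphisms. Fix a continuous function χ : K → ℂ and a scalar d ∈ ℂ. Let ω be a continuous unitary representation of Γ on a complex Hilbert space E, with Q the χ-averaged operator of the K-representation k ↦ ω(ι_Γ(k)), and set Φ(γ) := Q ∘ ω(γ) ∘ Q. For each ℓ ∈ ℕ let ρ_ℓ be a continuous unitary representation of G on a complex Hilbert space H_ℓ, with P_ℓ the χ-averaged operator of k ↦ ρ_ℓ(ι_G(k)), and set Φ_ℓ(g) := P_ℓ ∘ ρ_ℓ(g) ∘ P_ℓ. Suppose given bounded linear maps R_ℓ : H_ℓ → E satisfying R_ℓ ∘ ρ_ℓ(ι_G(k)) = ω(ι_Γ(k)) ∘ R_ℓ for all k ∈ K, arbitrary maps D_ℓ : Γ → G, a vector f ∈ E with Q f = f, and vectors f̃_ℓ ∈ H_ℓ with P_ℓ f̃_ℓ = f̃_ℓ and R_ℓ f̃_ℓ = f for all ℓ. If S ⊆ Γ is a set such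 that sup_{γ ∈ S} ‖R_ℓ(ρ_ℓ(D_ℓ(γ)) f̃_ℓ) − ω(γ) f‖ → 0 as ℓ → ∞, then sup_{γ ∈ S} ‖R_ℓ(Φ_ℓ(D_ℓ(γ)) f̃_ℓ) − Φ(γ) f‖ → 0 as ℓ → ∞. -/
open MeasureTheory Filter

/-- The `χ`-averaged operator of a family of operators `π` on `H`:
`v ↦ d • ∫_K conj (χ k) • (π k v) dμ(k)`. -/
noncomputable def avgOp {K : Type*} [MeasurableSpace K]
    {H : Type*} [NormedAddCommGroup H] [NormedSpace ℂ H]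
    (μ : Measure K) (χ : K → ℂ) (d : ℂ) (π : K → H →L[ℂ] H) : H → H :=
  fun v => d • ∫ k, (starRingEnd ℂ) (χ k) • (π k) v ∂μ

/-! The χ-averaged operators intertwine with every intertwiner and are `C`-Lipschitz for
`C = ‖d‖ ∫ ‖χ‖`. Hence `R Φ_ℓ(D_ℓ γ) f̃_ℓ - Φ(γ) f = Q (R ρ_ℓ(D_ℓ γ) f̃_ℓ - ω(γ) f)`, whose norm
is at most `C` times the quantity assumed to tend to zero uniformly on `S`. -/

section AvgOp

variable {K : Type*} [TopologicalSpace K] [CompactSpace K]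
    [MeasurableSpace K] [OpensMeasurableSpace K]
    (μ : Measure K) [IsFiniteMeasure μ] {χ : K → ℂ} (d : ℂ)
    {H : Type*} [NormedAddCommGroup H] [NormedSpace ℂ H] {π : K → H →L[ℂ] H}

theorem integrable_avgOp_integrand (hχ : Continuous χ) (hπ : ∀ v, Continuous fun k => π k v)
    (v : H) : Integrable (fun k => (starRingEnd ℂ) (χ k) • π k v) μ :=
  ((continuous_star.comp hχ).smul (hπ v)).integrable_of_hasCompactSupport
    (HasCompactSupport.of_compactSpace _)

theorem avgOp_sub (hχ : Continuous χ) (hπ : ∀ v, Continuous fun k => π k v) (u v : H) :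
    avgOp μ χ d π u - avgOp μ χ d π v = avgOp μ χ d π (u - v) := by
  simp only [avgOp, ← smul_sub, ← integral_sub (integrable_avgOp_integrand μ hχ hπ u)
    (integrable_avgOp_integrand μ hχ hπ v), map_sub]

theorem norm_avgOp_le (hχ : Continuous χ) (hπ : ∀ k w, ‖π k w‖ ≤ ‖w‖) (v : H) :
    ‖avgOp μ χ d π v‖ ≤ (‖d‖ * ∫ k, ‖χ k‖ ∂μ) * ‖v‖ := by
  rw [avgOp, norm_smul, mul_assoc, ← integral_mul_const]
  gcongr
  refine norm_integral_le_of_norm_le ((hχ.norm.mul continuous_const).integrable_of_hasCompactSupport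
    (HasCompactSupport.of_compactSpace _)) (Eventually.of_forall fun k => ?_)
  rw [norm_smul, RCLike.norm_conj]
  gcongr
  exact hπ k v

theorem norm_avgOp_sub_avgOp_le (hχ : Continuous χ) (hπ : ∀ v, Continuous fun k => π k v)
    (hπn : ∀ k w, ‖π k w‖ ≤ ‖w‖) (u v : H) :
    ‖avgOp μ χ d π u - avgOp μ χ d π v‖ ≤ (‖d‖ * ∫ k, ‖χ k‖ ∂μ) * ‖u - v‖ := by
  rw [avgOp_sub μ d hχ hπ]
  exact norm_avgOp_le μ d hχ hπn _

theorem map_avgOp [CompleteSpace H] (hχ : Continuous χ) (hπ : ∀ v, Continuous fun k => π k v)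
    {E : Type*} [NormedAddCommGroup E] [NormedSpace ℂ E] [CompleteSpace E]
    {σ : K → E →L[ℂ] E} (R : H →L[ℂ] E)
    (hR : ∀ k v, R (π k v) = σ k (R v)) (v : H) :
    R (avgOp μ χ d π v) = avgOp μ χ d σ (R v) := by
  rw [avgOp, map_smul, ← R.integral_comp_comm (integrable_avgOp_integrand μ hχ hπ v)]
  simp only [avgOp, map_smul, hR]

end AvgOp

theorem tendsto_iSup_of_le_const_mul {α ι : Type*} {l : Filter α} {f g : α → ι → ℝ} {C : ℝ}
    (hC : 0 ≤ C) (hf : ∀ a i, 0 ≤ f a i) (hg : ∀ a i, 0 ≤ g a i)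
    (hg_bdd : ∀ a, BddAbove (Set.range (g a))) (hfg : ∀ a i, f a i ≤ C * g a i)
    (hlim : Tendsto (fun a => ⨆ i, g a i) l (nhds 0)) :
    Tendsto (fun a => ⨆ i, f a i) l (nhds 0) := by
  have hle : ∀ a, ⨆ i, f a i ≤ C * ⨆ i, g a i := fun a =>
    Real.iSup_le (fun i => (hfg a i).trans (by gcongr; exact le_ciSup (hg_bdd a) i))
      (mul_nonneg hC (Real.iSup_nonneg (hg a)))
  exact squeeze_zero (fun a => Real.iSup_nonneg (hf a)) hle (by simpa using hlim.const_mul C)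

theorem stmt0_general {K G Γ : Type*}
    [Group K] [TopologicalSpace K] [CompactSpace K]
    [MeasurableSpace K] [BorelSpace K]
    [Group G] [TopologicalSpace G]
    [Group Γ] [TopologicalSpace Γ]
    (μ : Measure K) [IsProbabilityMeasure μ]
    (ιG : K →* G) (hιG : Continuous ιG)
    (ιΓ : K →* Γ) (hιΓ : Continuous ιΓ)
    (χ : K → ℂ) (hχ : Continuous χ) (d : ℂ)
    {E : Type*} [NormedAddCommGroup E] [InnerProductSpace ℂ E] [CompleteSpace E]
    (ω : Γ →* unitary (E →L[ℂ] E))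
    (hω : ∀ v : E, Continuous fun γ => (ω γ : E →L[ℂ] E) v)
    (Q : E → E) (hQ : Q = avgOp μ χ d fun k => (ω (ιΓ k) : E →L[ℂ] E))
    (Φ : Γ → E → E) (hΦ : ∀ γ v, Φ γ v = Q ((ω γ : E →L[ℂ] E) (Q v)))
    (H : ℕ → Type*) [∀ ℓ, NormedAddCommGroup (H ℓ)] [∀ ℓ, InnerProductSpace ℂ (H ℓ)]
    [∀ ℓ, CompleteSpace (H ℓ)]
    (ρ : ∀ ℓ : ℕ, G →* unitary (H ℓ →L[ℂ] H ℓ))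
    (hρ : ∀ (ℓ : ℕ) (v : H ℓ), Continuous fun g => (ρ ℓ g : H ℓ →L[ℂ] H ℓ) v)
    (P : ∀ ℓ : ℕ, H ℓ → H ℓ)
    (hP : ∀ ℓ : ℕ, P ℓ = avgOp μ χ d fun k => (ρ ℓ (ιG k) : H ℓ →L[ℂ] H ℓ))
    (Φℓ : ∀ ℓ : ℕ, G → H ℓ → H ℓ)
    (hΦℓ : ∀ (ℓ : ℕ) (g : G) (v : H ℓ), Φℓ ℓ g v = P ℓ ((ρ ℓ g : H ℓ →L[ℂ] H ℓ) (P ℓ v)))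
    (R : ∀ ℓ : ℕ, H ℓ →L[ℂ] E)
    (hR : ∀ (ℓ : ℕ) (k : K) (v : H ℓ),
      R ℓ ((ρ ℓ (ιG k) : H ℓ →L[ℂ] H ℓ) v) = (ω (ιΓ k) : E →L[ℂ] E) (R ℓ v))
    (D : ℕ → Γ → G)
    (f : E) (hf : Q f = f)
    (ft : ∀ ℓ : ℕ, H ℓ)
    (hft : ∀ ℓ : ℕ, P ℓ (ft ℓ) = ft ℓ)
    (S : Set Γ)
    (hconv : Tendsto
      (fun ℓ : ℕ => ⨆ γ : S, ‖R ℓ ((ρ ℓ (D ℓ γ) : H ℓ →L[ℂ] H ℓ) (ft ℓ)) - (ω γ : E →L[ℂ] E) f‖)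
      atTop (nhds 0)) :
    Tendsto
      (fun ℓ : ℕ => ⨆ γ : S, ‖R ℓ (Φℓ ℓ (D ℓ γ) (ft ℓ)) - Φ γ f‖)
      atTop (nhds 0) := by
  have hC : 0 ≤ ‖d‖ * ∫ k, ‖χ k‖ ∂μ := by positivity
  refine tendsto_iSup_of_le_const_mul hC (fun _ _ => norm_nonneg _) (fun _ _ => norm_nonneg _)
    (fun ℓ => ⟨‖R ℓ‖ * ‖ft ℓ‖ + ‖f‖, ?_⟩) (fun ℓ γ => ?_) hconv
  · rintro _ ⟨γ, rfl⟩
    refine (norm_sub_le _ _).trans ?_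
    rw [Unitary.norm_map]
    gcongr
    exact ((R ℓ).le_opNorm _).trans_eq (by rw [Unitary.norm_map])
  · have hRP : R ℓ (Φℓ ℓ (D ℓ γ) (ft ℓ)) = Q (R ℓ ((ρ ℓ (D ℓ γ) : H ℓ →L[ℂ] H ℓ) (ft ℓ))) := by
      rw [hΦℓ, hft, hP, hQ]
      exact map_avgOp μ d hχ (fun v => (hρ ℓ v).comp hιG) (R ℓ) (hR ℓ) _
    rw [hRP, hΦ, hf, hQ]
    exact norm_avgOp_sub_avgOp_le μ d hχ (fun v => (hω v).comp hιΓ)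
      (fun k w => (Unitary.norm_map _ w).le) _ _

/-- Abstract core of the approximation theorem: if the matrix coefficients of the contracting
sequence `ρ ℓ ∘ D ℓ` converge (uniformly on `S`) to those of `ω`, then the corresponding
spherical-type functions `Φℓ = Pℓ ∘ ρℓ ∘ Pℓ` converge to `Φ = Q ∘ ω ∘ Q`. -/
theorem stmt0 {K G Γ : Type*}
    [Group K] [TopologicalSpace K] [IsTopologicalGroup K] [CompactSpace K]
    [MeasurableSpace K] [BorelSpace K]
    [Group G] [TopologicalSpace G] [IsTopologicalGroup G]
    [Group Γ] [TopologicalSpace Γ] [IsTopologicalGroup Γ]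
    (μ : Measure K) [μ.IsHaarMeasure] [IsProbabilityMeasure μ]
    (ιG : K →* G) (hιG : Continuous ιG)
    (ιΓ : K →* Γ) (hιΓ : Continuous ιΓ)
    (χ : K → ℂ) (hχ : Continuous χ) (d : ℂ)
    {E : Type*} [NormedAddCommGroup E] [InnerProductSpace ℂ E] [CompleteSpace E]
    (ω : Γ →* unitary (E →L[ℂ] E))
    (hω : ∀ v : E, Continuous fun γ => (ω γ : E →L[ℂ] E) v)
    (Q : E → E) (hQ : Q = avgOp μ χ d fun k => (ω (ιΓ k) : E →L[ℂ] E))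
    (Φ : Γ → E → E) (hΦ : ∀ γ v, Φ γ v = Q ((ω γ : E →L[ℂ] E) (Q v)))
    (H : ℕ → Type*) [∀ ℓ, NormedAddCommGroup (H ℓ)] [∀ ℓ, InnerProductSpace ℂ (H ℓ)]
    [∀ ℓ, CompleteSpace (H ℓ)]
    (ρ : ∀ ℓ : ℕ, G →* unitary (H ℓ →L[ℂ] H ℓ))
    (hρ : ∀ (ℓ : ℕ) (v : H ℓ), Continuous fun g => (ρ ℓ g : H ℓ →L[ℂ] H ℓ) v)
    (P : ∀ ℓ : ℕ, H ℓ → H ℓ)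
    (hP : ∀ ℓ : ℕ, P ℓ = avgOp μ χ d fun k => (ρ ℓ (ιG k) : H ℓ →L[ℂ] H ℓ))
    (Φℓ : ∀ ℓ : ℕ, G → H ℓ → H ℓ)
    (hΦℓ : ∀ (ℓ : ℕ) (g : G) (v : H ℓ), Φℓ ℓ g v = P ℓ ((ρ ℓ g : H ℓ →L[ℂ] H ℓ) (P ℓ v)))
    (R : ∀ ℓ : ℕ, H ℓ →L[ℂ] E)
    (hR : ∀ (ℓ : ℕ) (k : K) (v : H ℓ),
      R ℓ ((ρ ℓ (ιG k) : H ℓ →L[ℂ] H ℓ) v) = (ω (ιΓ k) : E →L[ℂ] E) (R ℓ v))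
    (D : ℕ → Γ → G)
    (f : E) (hf : Q f = f)
    (ft : ∀ ℓ : ℕ, H ℓ)
    (hft : ∀ ℓ : ℕ, P ℓ (ft ℓ) = ft ℓ)
    (hftR : ∀ ℓ : ℕ, R ℓ (ft ℓ) = f)
    (S : Set Γ)
    (hconv : Tendsto
      (fun ℓ : ℕ => ⨆ γ : S, ‖R ℓ ((ρ ℓ (D ℓ γ) : H ℓ →L[ℂ] H ℓ) (ft ℓ)) - (ω γ : E →L[ℂ] E) f‖)
      atTop (nhds 0)) :
    Tendsto
      (fun ℓ : ℕ => ⨆ γ : S, ‖R ℓ (Φℓ ℓ (D ℓ γ) (ft ℓ)) - Φ γ f‖)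
      atTop (nhds 0) :=
  stmt0_general μ ιG hιG ιΓ hιΓ χ hχ d ω hω Q hQ Φ hΦ H ρ hρ P hP Φℓ hΦℓ R hR D f hf ft hft S hconv
end

section
/- Let n ≥ 1. For x ∈ ℝⁿ let X(x) denote the (n+1) × (n+1) real block matrix X(x) = fromBlocks 0 (−xᵀ) x 0 (a 1×1 zero block, the row −xᵀ, the column x, and an n×n zero block), and for an n×n real matrix k let ι(k) denote the (n+1) × (n+1) block matrix fromBlocks 1 0 0 k. Then: (a) for every n×n real matrix k and every x ∈ ℝⁿ, ι(k) · X(x) · ι(kᵀ) = X(k x) (where k x denotes the matrix–vector product); and (b) if k₁ and k₂ are n×n real orthogonal matrices (kᵢᵀ kᵢ = 1), then for every x₁, x₂ ∈ ℝⁿ and every real α ≠ 0, exp(α⁻¹ • X(x₁)) · ι(k₁) · exp(α⁻¹ • X(x₂)) · ι(k₂) = exp(α⁻¹ • X(x₁)) · exp(α⁻¹ • X(k₁ x₂)) · ι(k₁ k₂), where exp is the matrix exponential. -/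
open Matrix

/-! For orthogonal `k`, `ι(k)` intertwines `X(x)` with `X(kx)`, hence also their exponentials;
part (b) is then obtained by moving `ι(k₁)` to the right past `exp(α⁻¹ X(x₂))`. -/

/-- The embedding `x ↦ X(x)` of `ℝⁿ` as the complement of `so(n)` in `so(n+1)`:
`X(x) = fromBlocks 0 (−xᵀ) x 0`. -/
def Xmat {n : ℕ} (x : Fin n → ℝ) : Matrix (Fin 1 ⊕ Fin n) (Fin 1 ⊕ Fin n) ℝ :=
  Matrix.fromBlocks 0 (-(Matrix.replicateRow (Fin 1) x)) (Matrix.replicateCol (Fin 1) x) 0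

/-- The embedding `ι` of `n × n` matrices as the lower-right block of `(n+1) × (n+1)` matrices:
`ι(k) = fromBlocks 1 0 0 k`. -/
def iota {n : ℕ} (k : Matrix (Fin n) (Fin n) ℝ) : Matrix (Fin 1 ⊕ Fin n) (Fin 1 ⊕ Fin n) ℝ :=
  Matrix.fromBlocks 1 0 0 k

section

variable {n : ℕ}

lemma iota_mul (k₁ k₂ : Matrix (Fin n) (Fin n) ℝ) : iota k₁ * iota k₂ = iota (k₁ * k₂) := by
  simp [iota, fromBlocks_multiply]

lemma iota_one : iota (1 : Matrix (Fin n) (Fin n) ℝ) = 1 :=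
  fromBlocks_one

lemma iota_mul_Xmat_mul_iota_transpose (k : Matrix (Fin n) (Fin n) ℝ) (x : Fin n → ℝ) :
    iota k * Xmat x * iota kᵀ = Xmat (k *ᵥ x) := by
  simp only [iota, Xmat, fromBlocks_multiply]
  congr 1 <;> simp [replicateCol_mulVec, replicateRow_mulVec, transpose_mul]

lemma iota_mul_Xmat {k : Matrix (Fin n) (Fin n) ℝ} (hk : kᵀ * k = 1) (x : Fin n → ℝ) :
    iota k * Xmat x = Xmat (k *ᵥ x) * iota k := by
  rw [← iota_mul_Xmat_mul_iota_transpose, mul_assoc _ (iota kᵀ), iota_mul, hk, iota_one, mul_one]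

lemma iota_mul_exp_smul_Xmat {k : Matrix (Fin n) (Fin n) ℝ} (hk : kᵀ * k = 1) (c : ℝ)
    (x : Fin n → ℝ) :
    iota k * NormedSpace.exp (c • Xmat x) = NormedSpace.exp (c • Xmat (k *ᵥ x)) * iota k := by
  have : SemiconjBy (iota k) (Xmat x) (Xmat (k *ᵥ x)) := iota_mul_Xmat hk x
  -- matrices carry no global normed-ring structure; the operator norm provides one
  open scoped Norms.Operator in exact (this.smul_right c).exp_right

end

theorem stmt9_general (n : ℕ) :
    (∀ (k : Matrix (Fin n) (Fin n) ℝ) (x : Fin n → ℝ),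
      iota k * Xmat x * iota kᵀ = Xmat (k.mulVec x)) ∧
    (∀ (k₁ k₂ : Matrix (Fin n) (Fin n) ℝ), k₁ᵀ * k₁ = 1 → k₂ᵀ * k₂ = 1 →
      ∀ (x₁ x₂ : Fin n → ℝ) (α : ℝ), α ≠ 0 →
        NormedSpace.exp (α⁻¹ • Xmat x₁) * iota k₁ *
            NormedSpace.exp (α⁻¹ • Xmat x₂) * iota k₂ =
          NormedSpace.exp (α⁻¹ • Xmat x₁) *
            NormedSpace.exp (α⁻¹ • Xmat (k₁.mulVec x₂)) * iota (k₁ * k₂)) := by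
  refine ⟨iota_mul_Xmat_mul_iota_transpose, fun k₁ k₂ hk₁ _ x₁ x₂ α _ => ?_⟩
  rw [mul_assoc _ (iota k₁), iota_mul_exp_smul_Xmat hk₁, ← mul_assoc, mul_assoc _ (iota k₁),
    iota_mul]

/-- (a) `Ad(ι(k)) X(x) = X(kx)` and (b) the product identity
`D_α(k₁,x₁) D_α(k₂,x₂) = exp(x₁/α) exp(Ad(k₁)x₂/α) ι(k₁k₂)` for the contraction maps
`D_α(k,x) = exp(α⁻¹ X(x)) ι(k)` of `M(n)` to `SO(n+1)`. -/
theorem stmt9 (n : ℕ) (hn : 1 ≤ n) :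
    (∀ (k : Matrix (Fin n) (Fin n) ℝ) (x : Fin n → ℝ),
      iota k * Xmat x * iota kᵀ = Xmat (k.mulVec x)) ∧
    (∀ (k₁ k₂ : Matrix (Fin n) (Fin n) ℝ), k₁ᵀ * k₁ = 1 → k₂ᵀ * k₂ = 1 →
      ∀ (x₁ x₂ : Fin n → ℝ) (α : ℝ), α ≠ 0 →
        NormedSpace.exp (α⁻¹ • Xmat x₁) * iota k₁ *
            NormedSpace.exp (α⁻¹ • Xmat x₂) * iota k₂ =
          NormedSpace.exp (α⁻¹ • Xmat x₁) *
            NormedSpace.exp (α⁻¹ • Xmat (k₁.mulVec x₂)) * iota (k₁ * k₂)) :=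
  stmt9_general n
end
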